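/- Let u be a twice continuously differentiable function on R^n and x a point. Let V = {v_1,...,v_k} be unit vectors with directional resolution dθ = max_{|w|=1} min_i arccos(w·v_i) ≤ π/4. If the second directional derivatives satisfy d²u/dv_i² ≥ 0 at x for all i, then the eigenvalues λ_1 ≤ ... ≤ λ_n of the Hessian of u at x satisfy λ_1/λ_n ≥ -tan²(dθ) (assuming λ_n > 0). -/

import Mathlib

/-!
Let `w` be a unit eigenvector of the Hessian `H` for its smallest eigenvalue `λ₁`, and pick a
direction `v ∈ V` with `c = w ⬝ᵥ v ≥ cos dθ > 0`. Splitting `v = c w + z` with `z ⟂ w`,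
`|z|² = 1 - c²`, gives `0 ≤ v ⬝ᵥ H v = c² λ₁ + z ⬝ᵥ H z ≤ c² λ₁ + (1 - c²) λₙ`, hence
`λ₁ / λₙ ≥ 1 - 1 / c² ≥ 1 - 1 / cos² dθ = -tan² dθ`.
-/

open Matrix Real

namespace Matrix

variable {ι R : Type*} [Fintype ι]

section CommRing

variable [CommRing R]

theorem dotProduct_sub_smul_self_of_unit {w v : ι → R} (hw : w ⬝ᵥ w = 1) (hv : v ⬝ᵥ v = 1) :
    (v - (w ⬝ᵥ v) • w) ⬝ᵥ (v - (w ⬝ᵥ v) • w) = 1 - (w ⬝ᵥ v) ^ 2 := by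
  simp only [sub_dotProduct, dotProduct_sub, smul_dotProduct, dotProduct_smul, smul_eq_mul, hw, hv,
    dotProduct_comm v w]
  ring

theorem dotProduct_mulVec_eq_of_eigenvector {H : Matrix ι ι R} (hH : H.IsSymm) {w : ι → R}
    {μ : R} (hw : w ⬝ᵥ w = 1) (hHw : H *ᵥ w = μ • w) (v : ι → R) :
    v ⬝ᵥ H *ᵥ v =
      (w ⬝ᵥ v) ^ 2 * μ + (v - (w ⬝ᵥ v) • w) ⬝ᵥ H *ᵥ (v - (w ⬝ᵥ v) • w) := by
  have hHw' : w ᵥ* H = μ • w := by rw [← mulVec_transpose, hH, hHw]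
  simp only [mulVec_sub, mulVec_smul, sub_dotProduct, dotProduct_sub, smul_dotProduct,
    dotProduct_smul, smul_eq_mul, hHw, dotProduct_mulVec w, hHw', hw, dotProduct_comm v w]
  ring

end CommRing

theorem dotProduct_mulVec_le_of_unit_le {H : Matrix ι ι ℝ} {Λ : ℝ}
    (hΛ : ∀ w : ι → ℝ, w ⬝ᵥ w = 1 → w ⬝ᵥ H *ᵥ w ≤ Λ) (z : ι → ℝ) :
    z ⬝ᵥ H *ᵥ z ≤ Λ * (z ⬝ᵥ z) := by
  rcases eq_or_ne z 0 with rfl | hz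
  · simp
  have hzz : 0 < z ⬝ᵥ z := lt_of_le_of_ne (dotProduct_self_star_nonneg z)
    (Ne.symm (dotProduct_self_eq_zero.not.mpr hz))
  set s := √(z ⬝ᵥ z)
  have hs : 0 < s := sqrt_pos.mpr hzz
  have hs2 : s ^ 2 = z ⬝ᵥ z := sq_sqrt hzz.le
  have hunit := hΛ (s⁻¹ • z) (by
    rw [smul_dotProduct, dotProduct_smul, smul_eq_mul, smul_eq_mul, ← hs2]
    field_simp)
  rw [smul_dotProduct, mulVec_smul, dotProduct_smul, smul_eq_mul, smul_eq_mul, ← mul_assoc,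
    ← sq, inv_pow, hs2, inv_mul_le_iff₀ hzz] at hunit
  linarith

theorem dotProduct_mulVec_le_of_eigenvector {H : Matrix ι ι ℝ} (hH : H.IsSymm) {w : ι → ℝ}
    {μ Λ : ℝ} (hw : w ⬝ᵥ w = 1) (hHw : H *ᵥ w = μ • w)
    (hΛ : ∀ w : ι → ℝ, w ⬝ᵥ w = 1 → w ⬝ᵥ H *ᵥ w ≤ Λ) {v : ι → ℝ} (hv : v ⬝ᵥ v = 1) :
    v ⬝ᵥ H *ᵥ v ≤ (w ⬝ᵥ v) ^ 2 * μ + (1 - (w ⬝ᵥ v) ^ 2) * Λ := by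
  rw [dotProduct_mulVec_eq_of_eigenvector hH hw hHw, ← dotProduct_sub_smul_self_of_unit hw hv,
    mul_comm _ Λ]
  exact add_le_add le_rfl (dotProduct_mulVec_le_of_unit_le hΛ _)

theorem sq_dotProduct_le_one_of_unit {w v : ι → ℝ} (hw : w ⬝ᵥ w = 1) (hv : v ⬝ᵥ v = 1) :
    (w ⬝ᵥ v) ^ 2 ≤ 1 := by
  have := dotProduct_self_star_nonneg (v - (w ⬝ᵥ v) • w)
  rw [star_trivial, dotProduct_sub_smul_self_of_unit hw hv] at this
  linarith

end Matrix

theorem Real.cos_le_of_arccos_le {c θ : ℝ} (hc : c ^ 2 ≤ 1) (hθ : θ ≤ π) (h : arccos c ≤ θ) :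
    cos θ ≤ c := by
  have hc' : -1 ≤ c ∧ c ≤ 1 := ⟨by nlinarith, by nlinarith⟩
  simpa only [cos_arccos hc'.1 hc'.2] using cos_le_cos_of_nonneg_of_le_pi (arccos_nonneg c) hθ h

theorem Real.neg_tan_sq_le_div_of_cos_le {θ c l₁ lₙ : ℝ} (hθ : 0 < cos θ) (hc : cos θ ≤ c)
    (hlₙ : 0 < lₙ) (h : 0 ≤ c ^ 2 * l₁ + (1 - c ^ 2) * lₙ) : -tan θ ^ 2 ≤ l₁ / lₙ := by
  have htan := one_add_tan_sq_mul_cos_sq_eq_one hθ.ne'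
  have hcos : cos θ ^ 2 ≤ c ^ 2 := pow_le_pow_left₀ hθ.le hc 2
  rw [le_div_iff₀ hlₙ, neg_mul, neg_le_iff_add_nonneg]
  have hc2 : 0 < c ^ 2 := pow_pos (hθ.trans_le hc) 2
  -- `(1 + tan² θ) c² ≥ (1 + tan² θ) cos² θ = 1` turns `h` into `0 ≤ c² (tan² θ lₙ + l₁)`
  refine nonneg_of_mul_nonneg_right (a := c ^ 2) ?_ hc2
  nlinarith [mul_le_mul_of_nonneg_left hcos (by positivity : 0 ≤ (1 + tan θ ^ 2) * lₙ)]

theorem stmt_0_general (n k : ℕ) (u : (Fin n → ℝ) → ℝ)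
    (x : Fin n → ℝ) (V : Fin k → (Fin n → ℝ)) (hV : ∀ i, V i ⬝ᵥ V i = 1)
    (dθ : ℝ) (hdθ : dθ ≤ π / 4)
    (hres : ∀ w : Fin n → ℝ, w ⬝ᵥ w = 1 → ∃ i, Real.arccos (w ⬝ᵥ V i) ≤ dθ)
    (H : Matrix (Fin n) (Fin n) ℝ) (hH : H.IsSymm)
    (hHess : ∀ v : Fin n → ℝ, iteratedDeriv 2 (fun t : ℝ => u (x + t • v)) 0 = v ⬝ᵥ H.mulVec v)
    (hpos : ∀ i, 0 ≤ iteratedDeriv 2 (fun t : ℝ => u (x + t • V i)) 0)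
    (lam1 lamn : ℝ)
    (hlam1 : (∃ w : Fin n → ℝ, w ⬝ᵥ w = 1 ∧ H.mulVec w = lam1 • w) ∧
      ∀ w : Fin n → ℝ, w ⬝ᵥ w = 1 → lam1 ≤ w ⬝ᵥ H.mulVec w)
    (hlamn : (∃ w : Fin n → ℝ, w ⬝ᵥ w = 1 ∧ H.mulVec w = lamn • w) ∧
      ∀ w : Fin n → ℝ, w ⬝ᵥ w = 1 → w ⬝ᵥ H.mulVec w ≤ lamn)
    (hlamnpos : 0 < lamn) :
    -Real.tan dθ ^ 2 ≤ lam1 / lamn := by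
  obtain ⟨⟨w, hw, hHw⟩, -⟩ := hlam1
  obtain ⟨i, hi⟩ := hres w hw
  have hdθ0 : 0 ≤ dθ := (arccos_nonneg _).trans hi
  have hcos_pos : 0 < cos dθ := cos_pos_of_mem_Ioo ⟨by linarith [pi_pos], by linarith [pi_pos]⟩
  have hcos : cos dθ ≤ w ⬝ᵥ V i :=
    cos_le_of_arccos_le (sq_dotProduct_le_one_of_unit hw (hV i)) (by linarith [pi_pos]) hi
  have hconvex : 0 ≤ V i ⬝ᵥ H *ᵥ V i := hHess (V i) ▸ hpos i
  exact neg_tan_sq_le_div_of_cos_le hcos_pos hcos hlamnpos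
    (hconvex.trans (dotProduct_mulVec_le_of_eigenvector hH hw hHw hlamn.2 (hV i)))

/-- If a C² function has nonnegative second directional derivatives at `x` in a set of
unit directions with directional resolution `dθ ≤ π/4`, then the extreme eigenvalues
`λ1 ≤ λn` of the Hessian `H` of `u` at `x` satisfy `λ1/λn ≥ -tan²(dθ)` (assuming `λn > 0`). -/
theorem stmt_0 (n k : ℕ) (u : (Fin n → ℝ) → ℝ) (hu : ContDiff ℝ 2 u)
    (x : Fin n → ℝ) (V : Fin k → (Fin n → ℝ)) (hV : ∀ i, V i ⬝ᵥ V i = 1)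
    (dθ : ℝ) (hdθ0 : 0 ≤ dθ) (hdθ : dθ ≤ π / 4)
    (hres : ∀ w : Fin n → ℝ, w ⬝ᵥ w = 1 → ∃ i, Real.arccos (w ⬝ᵥ V i) ≤ dθ)
    (H : Matrix (Fin n) (Fin n) ℝ) (hH : H.IsSymm)
    (hHess : ∀ v : Fin n → ℝ, iteratedDeriv 2 (fun t : ℝ => u (x + t • v)) 0 = v ⬝ᵥ H.mulVec v)
    (hpos : ∀ i, 0 ≤ iteratedDeriv 2 (fun t : ℝ => u (x + t • V i)) 0)
    (lam1 lamn : ℝ)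
    (hlam1 : (∃ w : Fin n → ℝ, w ⬝ᵥ w = 1 ∧ H.mulVec w = lam1 • w) ∧
      ∀ w : Fin n → ℝ, w ⬝ᵥ w = 1 → lam1 ≤ w ⬝ᵥ H.mulVec w)
    (hlamn : (∃ w : Fin n → ℝ, w ⬝ᵥ w = 1 ∧ H.mulVec w = lamn • w) ∧
      ∀ w : Fin n → ℝ, w ⬝ᵥ w = 1 → w ⬝ᵥ H.mulVec w ≤ lamn)
    (hlamnpos : 0 < lamn) :
    -Real.tan dθ ^ 2 ≤ lam1 / lamn :=
  stmt_0_general n k u x V hV dθ hdθ hres H hH hHess hpos lam1 lamn hlam1 hlamn hlamnpos
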